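/- arXiv:2106.02500 — 2 statements merged into one kernel-verified Lean document; each statement's English description precedes it below -/
import Mathlib

section
/- Let n, δ ∈ ℕ with δ ≥ 3 and n ≥ 8. If G is a connected, C₄-free graph of order n, minimum degree δ and diameter d, then π(G) ≥ (δ² − 2⌊δ/2⌋ + 1)(d−4)(d−3)/(20(n−1)). -/
/-!
For a vertex x of a C₄-free graph, the sets N(w) \ N[x] (w ∈ N(x)) are pairwise disjoint and each
w ∈ N(x) has at most one neighbour in N(x); the number of such ordered pairs is even, which yields
|B₂(x)| ≥ δ² − 2⌊δ/2⌋ + 1 for the ball of radius 2. Along a diametral path u = y₀, …, y_d the balls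
B₂(y_q) with q in a fixed residue class mod 5 are pairwise disjoint, and every vertex of B₂(y_q) is
at distance at least |q − d(u,v)| − 2 from v. Taking the residue class that carries the largest
share of ∑_q (|q − d(u,v)| − 2) ≥ (d − 4)(d − 3)/4 gives ∑_w d(v,w) ≥ |B₂|(d − 4)(d − 3)/20.
-/

open Finset

lemma sub_three_mul_sub_two_eq (d : ℕ) : (d - 3) * (d - 2) = (d - 4) * (d - 3) + 2 * (d - 3) := by
  rcases Nat.lt_or_ge d 4 with hd | hd
  · interval_cases d <;> rfl
  · obtain ⟨e, rfl⟩ := Nat.exists_eq_add_of_le hd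
    simp only [Nat.add_sub_cancel_left, show 4 + e - 3 = e + 1 by omega,
      show 4 + e - 2 = e + 2 by omega]
    ring

lemma sub_four_mul_sub_three_le_four_mul_sum (d a : ℕ) :
    (d - 4) * (d - 3) ≤ 4 * ∑ q ∈ range (d + 1), (q - a + (a - q) - 2) := by
  induction d generalizing a with
  | zero => simp
  | succ d ih =>
    rw [show d + 1 - 4 = d - 3 by omega, show d + 1 - 3 = d - 2 by omega,
      sub_three_mul_sub_two_eq]
    -- drop the endpoint of `0, …, d + 1` farther from `a`
    rcases Nat.lt_or_ge (d + 1) (2 * a) with ha | ha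
    · rw [sum_range_succ']
      have hshift : ∀ q ∈ range (d + 1),
          q + 1 - a + (a - (q + 1)) - 2 = q - (a - 1) + (a - 1 - q) - 2 := fun q _ => by omega
      rw [sum_congr rfl hshift]
      have := ih (a - 1)
      omega
    · rw [sum_range_succ]
      have := ih a
      omega

lemma sq_sub_two_mul_half_add_one_le {δ k S M : ℕ} (hk : δ ≤ k) (hM : M ≤ k) (hMe : Even M)
    (hsum : k * δ ≤ S + k + M) : δ ^ 2 - 2 * (δ / 2) + 1 ≤ 1 + k + S := by
  have hsq : δ ^ 2 ≤ k * δ := by rw [sq]; exact Nat.mul_le_mul_right δ hk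
  by_cases hM2 : M ≤ 2 * (δ / 2)
  · omega
  · obtain ⟨c, rfl⟩ := hMe
    have hk1 : δ + 1 ≤ k := by omega
    have : (δ + 1) * δ ≤ k * δ := Nat.mul_le_mul_right δ hk1
    rcases Nat.lt_or_ge δ 2 with hδ | hδ
    · interval_cases δ <;> omega
    · have : δ ^ 2 + k ≤ k * δ + 1 := by nlinarith
      omega

lemma mul_sub_four_mul_sub_three_le_of_le_two {A n d S : ℝ} (hA : 0 ≤ A) (hAn : A ≤ n)
    (hd₀ : 0 ≤ d) (hd : d ≤ 2) (hn : 3 ≤ n) (hS : n - 1 ≤ S) : A * (d - 4) * (d - 3) ≤ 20 * S := by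
  nlinarith [mul_nonneg hA (mul_nonneg hd₀ (by linarith : (0 : ℝ) ≤ 7 - d))]

lemma cast_sub_four_mul_sub_three {d : ℕ} (hd : 3 ≤ d) :
    (((d - 4) * (d - 3) : ℕ) : ℝ) = ((d : ℝ) - 4) * ((d : ℝ) - 3) := by
  rcases Nat.lt_or_ge d 4 with hd4 | hd4
  · obtain rfl : d = 3 := by omega
    norm_num
  · push_cast [Nat.cast_sub hd4, Nat.cast_sub hd]; ring

lemma exists_sum_le_mul_sum_filter_mod (s : Finset ℕ) {k : ℕ} (hk : 0 < k) (f : ℕ → ℕ) :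
    ∃ r, ∑ q ∈ s, f q ≤ k * ∑ q ∈ s with q % k = r, f q := by
  obtain ⟨r, -, hr⟩ := exists_max_image (range k) (fun r => ∑ q ∈ s with q % k = r, f q)
    ⟨0, mem_range.2 hk⟩
  refine ⟨r, ?_⟩
  rw [← sum_fiberwise_of_maps_to (t := range k) (g := (· % k))
    (fun q _ => mem_range.2 (Nat.mod_lt q hk))]
  simpa using sum_le_card_nsmul _ _ _ hr

lemma mul_sum_le_sum_of_pairwiseDisjoint {ι α : Type*} [Fintype α] [DecidableEq α]
    {s : Finset ι} {B : ι → Finset α} (hB : (s : Set ι).PairwiseDisjoint B) {A : ℕ}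
    (hA : ∀ i ∈ s, A ≤ #(B i)) {L : ι → ℕ} {f : α → ℕ} (hL : ∀ i ∈ s, ∀ z ∈ B i, L i ≤ f z) :
    A * ∑ i ∈ s, L i ≤ ∑ z, f z :=
  calc A * ∑ i ∈ s, L i
      ≤ ∑ i ∈ s, #(B i) • L i := by
        rw [mul_sum]; exact sum_le_sum fun i hi => Nat.mul_le_mul_right _ (hA i hi)
    _ ≤ ∑ i ∈ s, ∑ z ∈ B i, f z := sum_le_sum fun i hi => card_nsmul_le_sum _ _ _ (hL i hi)
    _ = ∑ z ∈ s.biUnion B, f z := (sum_biUnion hB).symm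
    _ ≤ ∑ z, f z := sum_le_sum_of_subset (subset_univ _)

namespace SimpleGraph

variable {V : Type*} {G : SimpleGraph V}

/-- The closed walk `a b c d a` is a 4-cycle as soon as `a ≠ c` and `b ≠ d`: adjacent vertices are
distinct anyway. -/
def C4Free (G : SimpleGraph V) : Prop :=
  ∀ a b c d : V, G.Adj a b → G.Adj b c → G.Adj c d → G.Adj d a → a ≠ c → b ≠ d → False

lemma Walk.dist_getVert_eq_of_length_eq_dist {u w : V} (p : G.Walk u w)
    (hp : p.length = G.dist u w) {q : ℕ} (hq : q ≤ p.length) : G.dist u (p.getVert q) = q := by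
  have hpre : G.dist u (p.getVert q) ≤ q := (dist_le (p.take q)).trans (by simp [take_length])
  have hsuf : G.dist (p.getVert q) w ≤ p.length - q :=
    (dist_le (p.drop q)).trans (by simp [drop_length])
  have := (p.take q).reachable.dist_triangle_left w
  omega

variable [Fintype V] [DecidableEq V]

lemma Connected.card_sub_one_le_sum_dist (hconn : G.Connected) (v : V) :
    Fintype.card V - 1 ≤ ∑ z, G.dist v z :=
  calc Fintype.card V - 1 = ∑ _z ∈ univ.erase v, 1 := by simp [card_erase_of_mem]
    _ ≤ ∑ z ∈ univ.erase v, G.dist v z :=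
      sum_le_sum fun _z hz => hconn.pos_dist_of_ne (ne_of_mem_erase hz).symm
    _ ≤ ∑ z, G.dist v z := sum_le_sum_of_subset (subset_univ _)

theorem Connected.mul_le_twenty_mul_sum_dist (hconn : G.Connected) {A : ℕ}
    (hA : ∀ x, A ≤ #({z | G.dist x z ≤ 2} : Finset V)) (u w v : V) :
    A * ((G.dist u w - 4) * (G.dist u w - 3)) ≤ 20 * ∑ z, G.dist v z := by
  set d := G.dist u w
  set a := G.dist u v
  obtain ⟨p, hp⟩ := hconn.exists_walk_length_eq_dist u w
  set ball : ℕ → Finset V := fun q => {z | G.dist (p.getVert q) z ≤ 2}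
  obtain ⟨r, hr⟩ := exists_sum_le_mul_sum_filter_mod (range (d + 1)) (k := 5) (by norm_num)
    fun q => q - a + (a - q) - 2
  set Q := {q ∈ range (d + 1) | q % 5 = r}
  have hQ : ∀ q ∈ Q, G.dist u (p.getVert q) = q := fun q hq =>
    p.dist_getVert_eq_of_length_eq_dist hp
      (hp ▸ Nat.lt_succ_iff.1 (mem_range.1 (mem_filter.1 hq).1))
  have hdisj : (Q : Set ℕ).PairwiseDisjoint ball := by
    intro q₁ hq₁ q₂ hq₂ hne
    refine Finset.disjoint_left.2 fun z hz₁ hz₂ => ?_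
    simp only [ball, mem_filter_univ] at hz₁ hz₂
    have h₁ := hQ q₁ hq₁
    have h₂ := hQ q₂ hq₂
    simp only [Q, coe_filter, Set.mem_ofPred_eq] at hq₁ hq₂
    have := hconn.dist_triangle (u := u) (v := p.getVert q₁) (w := p.getVert q₂)
    have := hconn.dist_triangle (u := u) (v := p.getVert q₂) (w := p.getVert q₁)
    have := hconn.dist_triangle (u := p.getVert q₁) (v := z) (w := p.getVert q₂)
    have := G.dist_comm (u := p.getVert q₁) (v := p.getVert q₂)
    have := G.dist_comm (u := z) (v := p.getVert q₂)
    omega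
  have hL : ∀ q ∈ Q, ∀ z ∈ ball q, q - a + (a - q) - 2 ≤ G.dist v z := by
    intro q hq z hz
    simp only [ball, mem_filter_univ] at hz
    have := hQ q hq
    have := hconn.dist_triangle (u := u) (v := v) (w := p.getVert q)
    have := hconn.dist_triangle (u := u) (v := p.getVert q) (w := v)
    have := hconn.dist_triangle (u := v) (v := z) (w := p.getVert q)
    have := G.dist_comm (u := v) (v := p.getVert q)
    have := G.dist_comm (u := z) (v := p.getVert q)
    omega
  calc A * ((d - 4) * (d - 3))
      ≤ A * (4 * ∑ q ∈ range (d + 1), (q - a + (a - q) - 2)) :=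
        Nat.mul_le_mul_left A (sub_four_mul_sub_three_le_four_mul_sum d a)
    _ ≤ A * (4 * (5 * ∑ q ∈ Q, (q - a + (a - q) - 2))) := by gcongr
    _ = 20 * (A * ∑ q ∈ Q, (q - a + (a - q) - 2)) := by ring
    _ ≤ 20 * ∑ z, G.dist v z := by
        gcongr; exact mul_sum_le_sum_of_pairwiseDisjoint hdisj (fun q _ => hA _) hL

theorem Connected.mul_dist_sub_four_mul_dist_sub_three_le (hconn : G.Connected) {A : ℕ}
    (hA : ∀ x, A ≤ #({z | G.dist x z ≤ 2} : Finset V)) (hV : 3 ≤ Fintype.card V) (u w v : V) :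
    (A : ℝ) * ((G.dist u w : ℝ) - 4) * ((G.dist u w : ℝ) - 3) ≤ 20 * ∑ z, (G.dist v z : ℝ) := by
  rcases Nat.lt_or_ge (G.dist u w) 3 with hd | hd
  · have hS : ((Fintype.card V - 1 : ℕ) : ℝ) ≤ ∑ z, (G.dist v z : ℝ) := by
      exact_mod_cast hconn.card_sub_one_le_sum_dist v
    rw [Nat.cast_sub (by omega), Nat.cast_one] at hS
    refine mul_sub_four_mul_sub_three_le_of_le_two (Nat.cast_nonneg A)
      (Nat.cast_le.2 ((hA v).trans (card_le_univ _))) (Nat.cast_nonneg _)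
      (by exact_mod_cast (by omega : G.dist u w ≤ 2)) (by exact_mod_cast hV) hS
  · rw [mul_assoc, ← cast_sub_four_mul_sub_three hd]
    exact_mod_cast hconn.mul_le_twenty_mul_sum_dist hA u w v

variable [DecidableRel G.Adj]

lemma C4Free.card_neighborFinset_inter_le_one (h : G.C4Free) {x w : V} (hxw : x ≠ w) :
    #(G.neighborFinset x ∩ G.neighborFinset w) ≤ 1 := by
  refine card_le_one.2 fun a ha b hb => ?_
  simp only [mem_inter, mem_neighborFinset] at ha hb
  by_contra hab
  exact h x a w b ha.1 ha.2.symm hb.2 hb.1.symm hxw hab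

lemma C4Free.pairwiseDisjoint_neighborFinset_sdiff (h : G.C4Free) (x : V) :
    (G.neighborFinset x : Set V).PairwiseDisjoint
      fun w => G.neighborFinset w \ insert x (G.neighborFinset x) := by
  intro w₁ hw₁ w₂ hw₂ hne
  refine Finset.disjoint_left.2 fun z hz₁ hz₂ => ?_
  simp only [mem_sdiff, mem_insert, mem_neighborFinset, not_or] at hz₁ hz₂
  rw [mem_coe, mem_neighborFinset] at hw₁ hw₂
  exact hz₁.2.1 <| card_le_one.1 (h.card_neighborFinset_inter_le_one hne) z
    (by simp [hz₁.1, hz₂.1]) x (by simp [hw₁.symm, hw₂.symm])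

lemma even_sum_card_neighborFinset_inter (s : Finset V) :
    Even (∑ w ∈ s, #(G.neighborFinset w ∩ s)) := by
  classical
  set H := ((⊤ : G.Subgraph).induce (s : Set V)).spanningCoe
  have hdeg : ∀ w, H.degree w = if w ∈ s then #(G.neighborFinset w ∩ s) else 0 := by
    intro w
    rw [← card_neighborFinset_eq_degree]
    split_ifs with hw
    · congr 1; ext z; simp [H, hw, and_comm]
    · rw [card_eq_zero]; ext z; simp [H, hw]
  have := H.sum_degrees_eq_twice_card_edges
  simp only [hdeg, sum_ite_mem, univ_inter] at this
  exact ⟨_, this.trans (two_mul _)⟩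

lemma minDegree_le_card_sdiff_add_one_add (x w : V) :
    G.minDegree ≤ #(G.neighborFinset w \ insert x (G.neighborFinset x)) + 1 +
      #(G.neighborFinset w ∩ G.neighborFinset x) := by
  have hsplit := card_inter_add_card_sdiff (G.neighborFinset w) (insert x (G.neighborFinset x))
  have hins : #(G.neighborFinset w ∩ insert x (G.neighborFinset x)) ≤
      #(G.neighborFinset w ∩ G.neighborFinset x) + 1 := by
    refine (card_le_card fun z hz => ?_).trans (card_insert_le x _)
    simp only [mem_inter, mem_insert] at hz ⊢
    tauto
  have := G.minDegree_le_degree w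
  rw [← card_neighborFinset_eq_degree] at this
  omega

theorem C4Free.minDegree_sq_sub_le_card_ball (h : G.C4Free) (x : V) :
    G.minDegree ^ 2 - 2 * (G.minDegree / 2) + 1 ≤ #{z | G.dist x z ≤ 2} := by
  set N := G.neighborFinset x
  set P : V → Finset V := fun w => G.neighborFinset w \ insert x N
  have hP : ∀ {w z}, z ∈ P w ↔ G.Adj w z ∧ z ≠ x ∧ z ∉ N := by simp [P]
  have hPdisj : (N : Set V).PairwiseDisjoint P := h.pairwiseDisjoint_neighborFinset_sdiff x
  have hball : insert x (N ∪ N.biUnion P) ⊆ ({z | G.dist x z ≤ 2} : Finset V) := by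
    intro z hz
    simp only [mem_insert, mem_union, mem_biUnion] at hz
    rw [mem_filter_univ]
    rcases hz with rfl | hz | ⟨w, hw, hz⟩
    · simp
    · rw [dist_eq_one_iff_adj.2 ((mem_neighborFinset _ _ _).1 hz)]; omega
    · exact dist_le (.cons ((mem_neighborFinset _ _ _).1 hw) (.cons (hP.1 hz).1 .nil))
  have hcard : #(insert x (N ∪ N.biUnion P)) = 1 + #N + ∑ w ∈ N, #(P w) := by
    rw [card_insert_of_notMem, card_union_of_disjoint, card_biUnion hPdisj]
    · ring
    · exact Finset.disjoint_left.2 fun z hzN hz => by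
        obtain ⟨w, -, hz⟩ := mem_biUnion.1 hz
        exact (hP.1 hz).2.2 hzN
    · simp only [mem_union, mem_biUnion, not_or, not_exists, not_and]
      exact ⟨by simp [N], fun w _ hw => (hP.1 hw).2.1 rfl⟩
  refine le_trans ?_ (hcard ▸ card_le_card hball)
  apply sq_sub_two_mul_half_add_one_le (M := ∑ w ∈ N, #(G.neighborFinset w ∩ N))
  · rw [card_neighborFinset_eq_degree]; exact G.minDegree_le_degree x
  · refine (sum_le_card_nsmul _ _ 1 fun w hw => ?_).trans (by simp)
    exact h.card_neighborFinset_inter_le_one (G.ne_of_adj ((mem_neighborFinset _ _ _).1 hw)).symm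
  · exact even_sum_card_neighborFinset_inter N
  · calc #N * G.minDegree = ∑ _w ∈ N, G.minDegree := by simp [mul_comm]
      _ ≤ ∑ w ∈ N, (#(P w) + 1 + #(G.neighborFinset w ∩ N)) :=
        sum_le_sum fun w _ => minDegree_le_card_sdiff_add_one_add x w
      _ = _ := by simp only [sum_add_distrib, sum_const, smul_eq_mul, mul_one]

end SimpleGraph

theorem stmt13_general {V : Type*} [Fintype V] (G : SimpleGraph V)
    [DecidableRel G.Adj] (n δ d : ℕ) (hn : Fintype.card V = n) (hδ : G.minDegree = δ) (hconn : G.Connected) (h8 : 8 ≤ n) (hc4 : (∀ a b c d : V, G.Adj a b → G.Adj b c → G.Adj c d → G.Adj d a → a ≠ c → b ≠ d → False))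
    (hd : (Finset.univ.sup fun v : V => Finset.univ.sup fun w : V => G.dist v w) = d) :
    ((δ ^ 2 - 2 * (δ / 2) + 1 : ℕ) : ℝ) * ((d : ℝ) - 4) * ((d : ℝ) - 3) / (20 * ((n : ℝ) - 1)) ≤ (⨅ v : V, (∑ w : V, (G.dist v w : ℝ)) / ((n : ℝ) - 1)) := by
  classical
  have : Nonempty V := Fintype.card_pos_iff.1 (by omega)
  obtain ⟨u, -, hu⟩ := exists_mem_eq_sup univ univ_nonempty fun v => univ.sup fun w => G.dist v w
  obtain ⟨w, -, hw⟩ := exists_mem_eq_sup univ univ_nonempty fun w => G.dist u w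
  have huw : G.dist u w = d := by rw [← hd, hu, hw]
  have hball (x : V) : δ ^ 2 - 2 * (δ / 2) + 1 ≤ #({z | G.dist x z ≤ 2} : Finset V) :=
    hδ ▸ SimpleGraph.C4Free.minDegree_sq_sub_le_card_ball hc4 x
  have hn₁ : (0 : ℝ) < n - 1 := by
    have : (8 : ℝ) ≤ n := by exact_mod_cast h8
    linarith
  refine le_ciInf fun v => ?_
  rw [div_le_div_iff₀ (by positivity) hn₁]
  have key := hconn.mul_dist_sub_four_mul_dist_sub_three_le hball (by omega) u w v
  rw [huw] at key
  nlinarith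

theorem stmt13 {V : Type*} [Fintype V] [DecidableEq V] (G : SimpleGraph V)
    [DecidableRel G.Adj] (n δ d : ℕ) (hn : Fintype.card V = n) (hδ : G.minDegree = δ) (hconn : G.Connected) (h3 : 3 ≤ δ) (h8 : 8 ≤ n) (hc4 : (∀ a b c d : V, G.Adj a b → G.Adj b c → G.Adj c d → G.Adj d a → a ≠ c → b ≠ d → False))
    (hd : (Finset.univ.sup fun v : V => Finset.univ.sup fun w : V => G.dist v w) = d) :
    ((δ ^ 2 - 2 * (δ / 2) + 1 : ℕ) : ℝ) * ((d : ℝ) - 4) * ((d : ℝ) - 3) / (20 * ((n : ℝ) - 1)) ≤ (⨅ v : V, (∑ w : V, (G.dist v w : ℝ)) / ((n : ℝ) - 1)) :=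
  stmt13_general G n δ d hn hδ hconn h8 hc4 hd
end

section
/- Let n, δ, r ∈ ℕ with δ ≥ 3, r ≥ 1 and n ≥ 6. If G is a connected, triangle-free graph of order n, minimum degree δ and radius r, then π(G) ≥ (δ/(2(n−1)))·(r² − 7r + 47/8). -/
set_option maxHeartbeats 1000000

open SimpleGraph Finset

section Aux

variable {V : Type*} [Fintype V] [DecidableEq V] {G : SimpleGraph V} [DecidableRel G.Adj]

omit [Fintype V] [DecidableEq V] [DecidableRel G.Adj] in
private lemma walk_dist_le' (hc : G.Connected) {a b : V} (p : G.Walk a b) :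
    ∀ i j : ℕ, i ≤ j → j ≤ p.length → G.dist (p.getVert i) (p.getVert j) ≤ j - i := by
  intro i j hij hj
  induction j with
  | zero => simp [Nat.le_zero.mp hij]
  | succ j ih =>
    rcases Nat.lt_or_ge i (j+1) with h | h
    · have hij' : i ≤ j := Nat.lt_succ_iff.mp h
      have hadj : G.Adj (p.getVert j) (p.getVert (j+1)) := p.adj_getVert_succ (by omega)
      have h1 := hc.dist_triangle (u := p.getVert i) (v := p.getVert j) (w := p.getVert (j+1))
      have h2 : G.dist (p.getVert j) (p.getVert (j+1)) ≤ 1 := by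
        rw [dist_eq_one_iff_adj.mpr hadj]
      have h3 := ih hij' (by omega)
      omega
    · have : i = j + 1 := by omega
      subst this
      simp

omit [Fintype V] [DecidableEq V] [DecidableRel G.Adj] in
private lemma geodesic_dist' (hc : G.Connected) {a b : V} (p : G.Walk a b)
    (hp : p.length = G.dist a b) {i : ℕ} (hi : i ≤ p.length) :
    G.dist a (p.getVert i) = i := by
  have h1 : G.dist a (p.getVert i) ≤ i := by
    have := walk_dist_le' hc p 0 i (Nat.zero_le _) hi
    simpa using this
  have h2 : G.dist (p.getVert i) b ≤ p.length - i := by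
    have := walk_dist_le' hc p i p.length hi le_rfl
    simpa [Walk.getVert_length] using this
  have h3 := hc.dist_triangle (u := a) (v := p.getVert i) (w := b)
  omega

omit [DecidableEq V] in
private lemma nbr_disjoint_of_dist_ge_three' (hc : G.Connected) {u u' : V}
    (h : 3 ≤ G.dist u u') : Disjoint (G.neighborFinset u) (G.neighborFinset u') := by
  rw [Finset.disjoint_left]
  intro c hcu hcu'
  rw [mem_neighborFinset] at hcu hcu'
  have h1 : G.dist u c ≤ 1 := by rw [dist_eq_one_iff_adj.mpr hcu]
  have h2 : G.dist c u' ≤ 1 := by rw [dist_eq_one_iff_adj.mpr hcu'.symm]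
  have := hc.dist_triangle (u := u) (v := c) (w := u')
  omega

private lemma nbr_disjoint_of_adj' (htf : G.CliqueFree 3) {u u' : V} (h : G.Adj u u') :
    Disjoint (G.neighborFinset u) (G.neighborFinset u') := by
  rw [Finset.disjoint_left]
  intro c hcu hcu'
  rw [mem_neighborFinset] at hcu hcu'
  exact htf {u, u', c} (is3Clique_triple_iff.mpr ⟨h, hcu, hcu'⟩)

omit [DecidableEq V] in
private lemma group_sum' (hc : G.Connected) {δ : ℕ} (hδ : δ ≤ G.minDegree) (v u : V) {i : ℕ}
    (hd : G.dist v u = i) (hi : 1 ≤ i) :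
    (δ:ℝ) * ((i:ℝ) - 1) ≤ ∑ w ∈ G.neighborFinset u, (G.dist v w : ℝ) := by
  have hcard : δ ≤ (G.neighborFinset u).card := by
    rw [card_neighborFinset_eq_degree]
    exact le_trans hδ (G.minDegree_le_degree u)
  have hbound : ∀ w ∈ G.neighborFinset u, ((i:ℝ) - 1) ≤ (G.dist v w : ℝ) := by
    intro w hw
    rw [mem_neighborFinset] at hw
    have h1 : G.dist w u = 1 := dist_eq_one_iff_adj.mpr hw.symm
    have h2 := hc.dist_triangle (u := v) (v := w) (w := u)
    have h3 : i ≤ G.dist v w + 1 := by omega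
    have h4 : (i:ℝ) ≤ (G.dist v w : ℝ) + 1 := by exact_mod_cast h3
    linarith
  have hpos : (0:ℝ) ≤ (i:ℝ) - 1 := by
    have : (1:ℝ) ≤ (i:ℝ) := by exact_mod_cast hi
    linarith
  calc (δ:ℝ) * ((i:ℝ) - 1) ≤ ((G.neighborFinset u).card : ℝ) * ((i:ℝ) - 1) := by
        apply mul_le_mul_of_nonneg_right _ hpos
        exact_mod_cast hcard
    _ ≤ ∑ w ∈ G.neighborFinset u, (G.dist v w : ℝ) := by
        have := Finset.card_nsmul_le_sum (G.neighborFinset u)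
          (fun w => (G.dist v w : ℝ)) ((i:ℝ) - 1) hbound
        simpa [nsmul_eq_mul] using this

private lemma arm_sum' (hc : G.Connected) (htf : G.CliqueFree 3) {δ : ℕ}
    (hδ : δ ≤ G.minDegree)
    (v : V) (g : ℕ → V) (ℓ P T : ℕ)
    (hgd : ∀ i, i ≤ ℓ → G.dist v (g i) = i)
    (hgadj : ∀ i, i < ℓ → G.Adj (g i) (g (i+1)))
    (hP : P ≤ ℓ) (hT : 4*T + 2 ≤ P) :
    (δ:ℝ) * (((T:ℝ)+1) * (2*(P:ℝ) - 3 - 4*(T:ℝ)))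
      ≤ ∑ w ∈ (Finset.range (T+1)).biUnion
          (fun t => G.neighborFinset (g (P-1-4*t)) ∪ G.neighborFinset (g (P-4*t))),
          (G.dist v w : ℝ) := by
  set F : ℕ → Finset V :=
    fun t => G.neighborFinset (g (P-1-4*t)) ∪ G.neighborFinset (g (P-4*t)) with hF
  have hgap : ∀ i i', i ≤ ℓ → i' ≤ ℓ → (i+3 ≤ i' ∨ i'+3 ≤ i) → 3 ≤ G.dist (g i) (g i') := by
    intro i i' hi hi' hgap
    have h1 := hc.dist_triangle (u := v) (v := g i) (w := g i')
    have h2 := hc.dist_triangle (u := v) (v := g i') (w := g i)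
    have e1 := hgd i hi
    have e2 := hgd i' hi'
    have e3 : G.dist (g i') (g i) = G.dist (g i) (g i') := dist_comm ..
    omega
  have hdisj : (↑(Finset.range (T+1)) : Set ℕ).PairwiseDisjoint F := by
    intro t ht t' ht' hne
    simp only [Finset.coe_range, Set.mem_Iio] at ht ht'
    have hb : ∀ s s', s < T+1 → s' < T+1 → s < s' → Disjoint (F s) (F s') := by
      intro s s' hs hs' hss
      rw [hF]
      simp only [Finset.disjoint_union_left, Finset.disjoint_union_right]
      refine ⟨⟨?_, ?_⟩, ?_, ?_⟩ <;>
        (apply nbr_disjoint_of_dist_ge_three' hc;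
         apply hgap _ _ (by omega) (by omega) (by omega))
    rcases Nat.lt_or_ge t t' with h | h
    · exact hb t t' ht ht' h
    · exact (hb t' t ht' ht (by omega)).symm
  rw [Finset.sum_biUnion hdisj]
  have hpert : ∀ t ∈ Finset.range (T+1),
      (δ:ℝ) * (2*(P:ℝ) - 8*(t:ℝ) - 3) ≤ ∑ w ∈ F t, (G.dist v w : ℝ) := by
    intro t ht
    simp only [Finset.mem_range] at ht
    have h4t : 4*t + 2 ≤ P := by omega
    have hadj : G.Adj (g (P-1-4*t)) (g (P-4*t)) := by
      have := hgadj (P-1-4*t) (by omega)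
      have he : (P-1-4*t) + 1 = P - 4*t := by omega
      rwa [he] at this
    have hd1 : G.dist v (g (P-1-4*t)) = P-1-4*t := hgd _ (by omega)
    have hd2 : G.dist v (g (P-4*t)) = P-4*t := hgd _ (by omega)
    have hsum := Finset.sum_union (f := fun w => (G.dist v w : ℝ))
      (nbr_disjoint_of_adj' htf hadj)
    rw [hF]
    simp only []
    rw [hsum]
    have g1 := group_sum' hc hδ v (g (P-1-4*t)) hd1 (by omega)
    have g2 := group_sum' hc hδ v (g (P-4*t)) hd2 (by omega)
    have c1 : ((P-1-4*t : ℕ) : ℝ) = (P:ℝ) - 1 - 4*(t:ℝ) := by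
      have h' : P-1-4*t + (1 + 4*t) = P := by omega
      have := congrArg (Nat.cast : ℕ → ℝ) h'
      push_cast at this
      linarith
    have c2 : ((P-4*t : ℕ) : ℝ) = (P:ℝ) - 4*(t:ℝ) := by
      have h' : P-4*t + 4*t = P := by omega
      have := congrArg (Nat.cast : ℕ → ℝ) h'
      push_cast at this
      linarith
    rw [c1] at g1
    rw [c2] at g2
    nlinarith [g1, g2]
  calc (δ:ℝ) * (((T:ℝ)+1) * (2*(P:ℝ) - 3 - 4*(T:ℝ)))
      = ∑ t ∈ Finset.range (T+1), (δ:ℝ) * (2*(P:ℝ) - 8*(t:ℝ) - 3) := by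
        rw [← Finset.mul_sum]
        have hgauss : (∑ t ∈ Finset.range (T+1), (t:ℝ)) = ((T:ℝ)+1)*(T:ℝ)/2 := by
          have h2 := Finset.sum_range_id_mul_two (T+1)
          have h3 : ((∑ i ∈ Finset.range (T+1), i : ℕ) : ℝ) * 2 = ((T:ℝ)+1)*(T:ℝ) := by
            exact_mod_cast congrArg (Nat.cast : ℕ → ℝ) h2
          push_cast at h3
          linarith
        have hs : (∑ t ∈ Finset.range (T+1), (2*(P:ℝ) - 8*(t:ℝ) - 3))
            = ((T:ℝ)+1) * (2*(P:ℝ) - 3) - 8*(((T:ℝ)+1)*(T:ℝ)/2) := by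
          rw [Finset.sum_sub_distrib, Finset.sum_sub_distrib, Finset.sum_const,
              Finset.card_range, ← Finset.mul_sum, hgauss, Finset.sum_const,
              Finset.card_range]
          push_cast
          ring
        rw [hs]
        ring
    _ ≤ ∑ t ∈ Finset.range (T+1), ∑ w ∈ F t, (G.dist v w : ℝ) :=
        Finset.sum_le_sum hpert

end Aux

theorem stmt15 {V : Type*} [Fintype V] [DecidableEq V] (G : SimpleGraph V)
    [DecidableRel G.Adj] (n δ r : ℕ) (hn : Fintype.card V = n) (hδ : G.minDegree = δ) (hconn : G.Connected) (h3 : 3 ≤ δ) (hr : 1 ≤ r) (h6 : 6 ≤ n) (htf : G.CliqueFree 3)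
    (hrad : (⨅ v : V, Finset.univ.sup fun w : V => G.dist v w) = r) :
    (δ : ℝ) / (2 * ((n : ℝ) - 1)) * ((r : ℝ) ^ 2 - 7 * (r : ℝ) + 47 / 8) ≤ (⨅ v : V, (∑ w : V, (G.dist v w : ℝ)) / ((n : ℝ) - 1)) := by
  have hV : Nonempty V := by
    refine Fintype.card_pos_iff.mp ?_
    omega
  have hδ' : δ ≤ G.minDegree := le_of_eq hδ.symm
  have hn1 : (0:ℝ) < (n:ℝ) - 1 := by
    have : (6:ℝ) ≤ (n:ℝ) := by exact_mod_cast h6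
    linarith
  have hecc : ∀ u : V, r ≤ Finset.univ.sup (fun w : V => G.dist u w) := by
    intro u
    rw [← hrad]
    exact ciInf_le (OrderBot.bddBelow _) u
  apply le_ciInf
  intro v
  have KEY : (δ:ℝ) * ((r:ℝ)^2 - 7*(r:ℝ) + 47/8) / 2 ≤ ∑ w : V, (G.dist v w : ℝ) := by
    have hsum_nonneg : (0:ℝ) ≤ ∑ w : V, (G.dist v w : ℝ) :=
      Finset.sum_nonneg (fun w _ => Nat.cast_nonneg _)
    by_cases hr7 : 7 ≤ r
    case neg =>
      have hr6 : r ≤ 6 := by omega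
      have hr1' : (1:ℝ) ≤ (r:ℝ) := by exact_mod_cast hr
      have hr6' : (r:ℝ) ≤ 6 := by exact_mod_cast hr6
      have hpoly : (r:ℝ)^2 - 7*(r:ℝ) + 47/8 ≤ 0 := by nlinarith
      have hδ0 : (0:ℝ) ≤ (δ:ℝ) := Nat.cast_nonneg _
      nlinarith
    case pos =>
      -- main construction
      set k : ℕ := Finset.univ.sup (fun w : V => G.dist v w) with hk
      have hkr : r ≤ k := hecc v
      have hub : ∀ x : V, G.dist v x ≤ k := fun x => Finset.le_sup (Finset.mem_univ x)
      obtain ⟨w0, -, hw0⟩ := Finset.exists_mem_eq_sup (Finset.univ : Finset V)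
        Finset.univ_nonempty (fun w : V => G.dist v w)
      obtain ⟨p, hp⟩ := hconn.exists_walk_length_eq_dist v w0
      have hpk : p.length = k := by rw [hp, ← hw0]
      have hgd : ∀ i, i ≤ k → G.dist v (p.getVert i) = i := by
        intro i hi
        exact geodesic_dist' hconn p hp (by omega)
      have hgadj : ∀ i, i < k → G.Adj (p.getVert i) (p.getVert (i+1)) := by
        intro i hi
        exact p.adj_getVert_succ (by omega)
      set T₁ : ℕ := (k-2)/4 with hT₁def
      have hkge : 7 ≤ k := le_trans hr7 hkr
      have hT₁ : 4*T₁ + 2 ≤ k := by omega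
      have mainsum := arm_sum' hconn htf hδ' v p.getVert k k T₁ hgd hgadj le_rfl hT₁
      set U₁ : Finset V := (Finset.range (T₁+1)).biUnion
          (fun t => G.neighborFinset (p.getVert (k-1-4*t)) ∪ G.neighborFinset (p.getVert (k-4*t))) with hU₁
      by_cases hq : 2*k + 11 ≤ 3*r
      case pos =>
        -- second arm
        set m : ℕ := k + 5 - r with hmdef
        have hmk : m ≤ k := by omega
        have hm5 : 5 ≤ m := by omega
        obtain ⟨x, -, hx⟩ := Finset.exists_mem_eq_sup (Finset.univ : Finset V)
          Finset.univ_nonempty (fun w : V => G.dist (p.getVert m) w)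
        have hdx : r ≤ G.dist (p.getVert m) x := by
          rw [← hx]
          exact hecc (p.getVert m)
        set h : ℕ := G.dist v x with hhdef
        have hhk : h ≤ k := hub x
        have hgmv : G.dist (p.getVert m) v = m := by
          rw [dist_comm]
          exact hgd m hmk
        have htri := hconn.dist_triangle (u := p.getVert m) (v := v) (w := x)
        have hRh : 2*r - k - 5 ≤ h := by omega
        obtain ⟨q0, hq0⟩ := hconn.exists_walk_length_eq_dist v x
        have hq0h : q0.length = h := by rw [hq0]
        have hqd : ∀ j, j ≤ h → G.dist v (q0.getVert j) = j := by
          intro j hj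
          exact geodesic_dist' hconn q0 hq0 (by omega)
        have hqadj : ∀ j, j < h → G.Adj (q0.getVert j) (q0.getVert (j+1)) := by
          intro j hj
          exact q0.adj_getVert_succ (by omega)
        set R : ℕ := 2*r - k - 5 with hRdef
        set T₂ : ℕ := (3*r - 2*k - 11)/4 with hT₂def
        have hT₂ : 4*T₂ + 2 ≤ R := by omega
        have qsum := arm_sum' hconn htf hδ' v q0.getVert h R T₂ hqd hqadj hRh hT₂
        set U₂ : Finset V := (Finset.range (T₂+1)).biUnion
            (fun s => G.neighborFinset (q0.getVert (R-1-4*s)) ∪ G.neighborFinset (q0.getVert (R-4*s))) with hU₂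
        -- cross disjointness
        have hcl : ∀ i j : ℕ, i ≤ k → m ≤ j → j ≤ R → 3 ≤ G.dist (p.getVert i) (q0.getVert j) := by
          intro i j hik hjm hjR
          have hgi := hgd i hik
          have hqj := hqd j (by omega)
          have t1 := hconn.dist_triangle (u := v) (v := p.getVert i) (w := q0.getVert j)
          have t2 := hconn.dist_triangle (u := v) (v := q0.getVert j) (w := p.getVert i)
          have e3 : G.dist (q0.getVert j) (p.getVert i) = G.dist (p.getVert i) (q0.getVert j) :=
            dist_comm ..
          have hqjx : G.dist (q0.getVert j) x ≤ h - j := by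
            have hw := walk_dist_le' hconn q0 j q0.length (by omega) le_rfl
            rw [Walk.getVert_length] at hw
            rw [hq0h] at hw
            exact hw
          have big := hconn.dist_triangle (u := p.getVert m) (v := p.getVert i) (w := q0.getVert j)
          have big2 := hconn.dist_triangle (u := p.getVert m) (v := q0.getVert j) (w := x)
          rcases Nat.le_total m i with hmi | hmi
          · have hd1 : G.dist (p.getVert m) (p.getVert i) ≤ i - m := by
              have := walk_dist_le' hconn p m i hmi (by omega)
              exact this
            omega
          · have hd1 : G.dist (p.getVert m) (p.getVert i) ≤ m - i := by
              have := walk_dist_le' hconn p i m hmi (by omega)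
              rwa [dist_comm (G := G) (u := p.getVert i)] at this
            omega
        have hcross : Disjoint U₁ U₂ := by
          rw [hU₁, hU₂, Finset.disjoint_biUnion_left]
          intro t ht
          rw [Finset.disjoint_biUnion_right]
          intro s hs
          simp only [Finset.mem_range] at ht hs
          simp only [Finset.disjoint_union_left, Finset.disjoint_union_right]
          refine ⟨⟨?_, ?_⟩, ?_, ?_⟩ <;>
            (apply nbr_disjoint_of_dist_ge_three' hconn;
             apply hcl _ _ (by omega) (by omega) (by omega))
        have hsplit := Finset.sum_union (f := fun w => (G.dist v w : ℝ)) hcross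
        have htot : ∑ w ∈ U₁ ∪ U₂, (G.dist v w : ℝ) ≤ ∑ w : V, (G.dist v w : ℝ) := by
          apply Finset.sum_le_sum_of_subset_of_nonneg (Finset.subset_univ _)
          intro w _ _
          exact Nat.cast_nonneg _
        -- final arithmetic
        have ha1 : (4*T₁ : ℕ) ≤ k - 2 := by omega
        have ha2 : (k : ℕ) ≤ 4*T₁ + 5 := by omega
        have hb1 : (4*T₂ : ℕ) ≤ 3*r - 2*k - 11 := by omega
        have hb2 : (3*r - 2*k - 11 : ℕ) ≤ 4*T₂ + 3 := by omega
        have ha1' : 4*(T₁:ℝ) ≤ (k:ℝ) - 2 := by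
          have h' : 4*T₁ + 2 ≤ k := by omega
          have := (Nat.cast_le (α := ℝ)).mpr h'
          push_cast at this
          linarith
        have ha2' : (k:ℝ) ≤ 4*(T₁:ℝ) + 5 := by exact_mod_cast ha2
        have hb1' : 4*(T₂:ℝ) ≤ 3*(r:ℝ) - 2*(k:ℝ) - 11 := by
          have h' : 4*T₂ + 2*k + 11 ≤ 3*r := by omega
          have := (Nat.cast_le (α := ℝ)).mpr h'
          push_cast at this
          linarith
        have hb2' : 3*(r:ℝ) - 2*(k:ℝ) - 11 ≤ 4*(T₂:ℝ) + 3 := by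
          have h' : 3*r ≤ 4*T₂ + 3 + 2*k + 11 := by omega
          have := (Nat.cast_le (α := ℝ)).mpr h'
          push_cast at this
          linarith
        have hRc : (R:ℝ) = 2*(r:ℝ) - (k:ℝ) - 5 := by
          have h' : R + k + 5 = 2*r := by omega
          have := congrArg (Nat.cast : ℕ → ℝ) h'
          push_cast at this
          linarith
        have hkr' : (r:ℝ) ≤ (k:ℝ) := by exact_mod_cast hkr
        have hr7' : (7:ℝ) ≤ (r:ℝ) := by exact_mod_cast hr7
        have hT₂0 : (0:ℝ) ≤ (T₂:ℝ) := Nat.cast_nonneg _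
        have hδ0 : (0:ℝ) ≤ (δ:ℝ) := Nat.cast_nonneg _
        have harith : ((r:ℝ)^2 - 7*(r:ℝ) + 47/8) / 2
            ≤ ((T₁:ℝ)+1) * (2*(k:ℝ) - 3 - 4*(T₁:ℝ)) + ((T₂:ℝ)+1) * (2*(R:ℝ) - 3 - 4*(T₂:ℝ)) := by
          rw [hRc]
          nlinarith [mul_nonneg (by linarith : (0:ℝ) ≤ 4*(T₁:ℝ) - ((k:ℝ) - 5))
              (by linarith : (0:ℝ) ≤ ((k:ℝ) - 2) - 4*(T₁:ℝ)),
            mul_nonneg (by linarith : (0:ℝ) ≤ 4*(T₂:ℝ) - (3*(r:ℝ) - 2*(k:ℝ) - 14))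
              (by linarith : (0:ℝ) ≤ (3*(r:ℝ) - 2*(k:ℝ) - 11) - 4*(T₂:ℝ)),
            mul_nonneg (by linarith : (0:ℝ) ≤ 4*(T₂:ℝ) - (3*(r:ℝ) - 2*(k:ℝ) - 14))
              (by linarith : (0:ℝ) ≤ (k:ℝ) - (r:ℝ) + 6),
            sq_nonneg ((k:ℝ) - (r:ℝ)), hT₂0]
        calc (δ:ℝ) * ((r:ℝ)^2 - 7*(r:ℝ) + 47/8) / 2
            ≤ (δ:ℝ) * (((T₁:ℝ)+1) * (2*(k:ℝ) - 3 - 4*(T₁:ℝ))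
                + ((T₂:ℝ)+1) * (2*(R:ℝ) - 3 - 4*(T₂:ℝ))) := by
              rw [mul_div_assoc]
              apply mul_le_mul_of_nonneg_left harith hδ0
          _ = (δ:ℝ) * (((T₁:ℝ)+1) * (2*(k:ℝ) - 3 - 4*(T₁:ℝ)))
                + (δ:ℝ) * (((T₂:ℝ)+1) * (2*(R:ℝ) - 3 - 4*(T₂:ℝ))) := by ring
          _ ≤ (∑ w ∈ U₁, (G.dist v w : ℝ)) + (∑ w ∈ U₂, (G.dist v w : ℝ)) := by
              exact add_le_add mainsum qsum
          _ = ∑ w ∈ U₁ ∪ U₂, (G.dist v w : ℝ) := hsplit.symm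
          _ ≤ ∑ w : V, (G.dist v w : ℝ) := htot
      case neg =>
        -- main arm only
        have h2k : 3*r ≤ 2*k + 10 := by omega
        have htot : ∑ w ∈ U₁, (G.dist v w : ℝ) ≤ ∑ w : V, (G.dist v w : ℝ) := by
          apply Finset.sum_le_sum_of_subset_of_nonneg (Finset.subset_univ _)
          intro w _ _
          exact Nat.cast_nonneg _
        have ha1' : 4*(T₁:ℝ) ≤ (k:ℝ) - 2 := by
          have h' : 4*T₁ + 2 ≤ k := by omega
          have := (Nat.cast_le (α := ℝ)).mpr h'
          push_cast at this
          linarith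
        have ha2' : (k:ℝ) ≤ 4*(T₁:ℝ) + 5 := by
          have h' : k ≤ 4*T₁ + 5 := by omega
          exact_mod_cast h'
        have h2k' : 3*(r:ℝ) ≤ 2*(k:ℝ) + 10 := by exact_mod_cast h2k
        have hkr' : (r:ℝ) ≤ (k:ℝ) := by exact_mod_cast hkr
        have hr7' : (7:ℝ) ≤ (r:ℝ) := by exact_mod_cast hr7
        have hδ0 : (0:ℝ) ≤ (δ:ℝ) := Nat.cast_nonneg _
        have harith : ((r:ℝ)^2 - 7*(r:ℝ) + 47/8) / 2
            ≤ ((T₁:ℝ)+1) * (2*(k:ℝ) - 3 - 4*(T₁:ℝ)) := by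
          nlinarith [mul_nonneg (by linarith : (0:ℝ) ≤ 4*(T₁:ℝ) - ((k:ℝ) - 5))
              (by linarith : (0:ℝ) ≤ ((k:ℝ) - 2) - 4*(T₁:ℝ)),
            sq_nonneg (2*(k:ℝ) - 3*(r:ℝ) + 10), sq_nonneg ((k:ℝ) - (r:ℝ))]
        calc (δ:ℝ) * ((r:ℝ)^2 - 7*(r:ℝ) + 47/8) / 2
            ≤ (δ:ℝ) * (((T₁:ℝ)+1) * (2*(k:ℝ) - 3 - 4*(T₁:ℝ))) := by
              rw [mul_div_assoc]
              apply mul_le_mul_of_nonneg_left harith hδ0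
          _ ≤ ∑ w ∈ U₁, (G.dist v w : ℝ) := mainsum
          _ ≤ ∑ w : V, (G.dist v w : ℝ) := htot
  -- conclude
  rw [div_mul_eq_mul_div, div_le_div_iff₀ (by positivity) hn1]
  nlinarith [mul_le_mul_of_nonneg_right KEY (le_of_lt hn1)]
end
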